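/- (Carleson Embedding) Let μ be a positive Radon measure on ℝⁿ and (a_I)_{I dyadic} a collection of non-negative numbers. Then for all f ∈ L²(μ), Σ_{I dyadic} a_I |⟨f⟩_I|² ≲ sup_{I dyadic} ( μ(I)^{-1} Σ_{J∈𝒟(I)} a_J ) · ‖f‖²_{L²(μ)}, where ⟨f⟩_I = μ(I)^{-1}∫_I f dμ and 𝒟(I) denotes the dyadic cubes contained in I. -/

import Mathlib

/-!
Replace `f` by `g = |f|` (for a measurable representative); this only increases the averages.
The layer-cake formula turns `∑ a_I ⟨g⟩_I²` into `∫₀^∞ 2t · ∑_{⟨g⟩_I > t} a_I dt`. Dyadic cubes are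
nested or disjoint, so every finite family of them is covered by its pairwise disjoint maximal
members (the whole level family may have no maximal cubes, since scales are unbounded), and the
Carleson condition `∑_{J ⊆ I} a_J ≤ K μ(I)` applied to these bounds the inner sum by `K μ` of
their union. A cube with `⟨g⟩_I > t` carries at most half of its mass on `{g ≤ t/2}`, so
`μ(I) ≤ (2/t) ∫_{I ∩ {2g > t}} g dμ`. The integrand is thus at most `4K ∫_{2g > t} g dμ`, and a
second layer-cake integration gives `8K ∫ g² dμ`.
-/

open MeasureTheory
open scoped Classical ENNReal NNReal

noncomputable section

/-- The dyadic cube of scale `k` (side length `2^{-k}`) and position `j` in `ℝⁿ`. -/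
def dyadicCube (n : ℕ) (k : ℤ) (j : Fin n → ℤ) : Set (EuclideanSpace ℝ (Fin n)) :=
  {x | ∀ i, (2:ℝ) ^ (-k) * (j i : ℝ) ≤ x i ∧ x i < (2:ℝ) ^ (-k) * ((j i : ℝ) + 1)}

/-- The average `⟨f⟩_s = μ(s)⁻¹ ∫_s f dμ`, set to `0` when `μ(s) = 0`. -/
def avg (n : ℕ) (μ : Measure (EuclideanSpace ℝ (Fin n))) (s : Set (EuclideanSpace ℝ (Fin n)))
    (f : EuclideanSpace ℝ (Fin n) → ℝ) : ℝ :=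
  if μ s = 0 then 0 else (∫ x in s, f x ∂μ) / (μ s).toReal

theorem Finset.exists_pairwiseDisjoint_cover_of_laminar {α : Type*} (𝒞 : Finset (Set α))
    (h𝒞 : ∀ A ∈ 𝒞, ∀ B ∈ 𝒞, A ⊆ B ∨ B ⊆ A ∨ Disjoint A B) :
    ∃ 𝒟 ⊆ 𝒞, (𝒟 : Set (Set α)).PairwiseDisjoint id ∧ ∀ A ∈ 𝒞, ∃ B ∈ 𝒟, A ⊆ B := by
  refine ⟨𝒞.filter (Maximal (· ∈ 𝒞)), Finset.filter_subset _ _, ?_, fun A hA => ?_⟩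
  · intro A hA B hB hAB
    simp only [Finset.coe_filter, Set.mem_ofPred_eq] at hA hB
    rcases h𝒞 A hA.1 B hB.1 with h | h | h
    · exact absurd (hA.2.eq_of_le hB.1 h) hAB
    · exact absurd (hB.2.eq_of_le hA.1 h).symm hAB
    · exact h
  · obtain ⟨B, hAB, hB⟩ := 𝒞.exists_le_maximal hA
    exact ⟨B, Finset.mem_filter.2 ⟨hB.1, hB⟩, hAB⟩

theorem tsum_indicator_le_of_packing {ι α : Type*} [MeasurableSpace α] (ν : Measure α)
    {Q : ι → Set α} (hQ : ∀ i, MeasurableSet (Q i))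
    (hlam : ∀ i j, Q i ⊆ Q j ∨ Q j ⊆ Q i ∨ Disjoint (Q i) (Q j))
    (S : Set ι) (w : ι → ℝ≥0∞) (B : ℝ≥0∞)
    (hpack : ∀ i ∈ S, ∑' j, (if Q j ⊆ Q i then w j else 0) ≤ B * ν (Q i)) :
    ∑' i, S.indicator w i ≤ B * ν (⋃ i ∈ S, Q i) := by
  refine ENNReal.summable.tsum_le_of_sum_le fun F => ?_
  set F' := F.filter (· ∈ S)
  obtain ⟨𝒟, h𝒟, hdisj, hcover⟩ := (F'.image Q).exists_pairwiseDisjoint_cover_of_laminar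
    (by simp only [Finset.forall_mem_image]; exact fun i _ j _ => hlam i j)
  have hsupp : ∀ C ∈ 𝒟, ∃ i ∈ S, C = Q i := fun C hC => by
    obtain ⟨i, hi, rfl⟩ := Finset.mem_image.1 (h𝒟 hC)
    exact ⟨i, (Finset.mem_filter.1 hi).2, rfl⟩
  calc ∑ i ∈ F, S.indicator w i = ∑ i ∈ F', w i := by
        rw [Finset.sum_filter]; exact Finset.sum_congr rfl fun i _ => Set.indicator_apply _ _ _
    _ ≤ ∑ i ∈ F', ∑ C ∈ 𝒟, if Q i ⊆ C then w i else 0 := Finset.sum_le_sum fun i hi => by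
        obtain ⟨C, hC, hiC⟩ := hcover (Q i) (Finset.mem_image_of_mem Q hi)
        simpa [hiC] using Finset.single_le_sum (f := fun C => if Q i ⊆ C then w i else 0)
          (fun _ _ => zero_le) hC
    _ = ∑ C ∈ 𝒟, ∑ i ∈ F', if Q i ⊆ C then w i else 0 := Finset.sum_comm
    _ ≤ ∑ C ∈ 𝒟, B * ν C := Finset.sum_le_sum fun C hC => by
        obtain ⟨i, hi, rfl⟩ := hsupp C hC
        exact (ENNReal.sum_le_tsum _).trans (hpack i hi)
    _ = B * ν (⋃ C ∈ 𝒟, C) := by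
        rw [← Finset.mul_sum]
        congr 1
        refine (measure_biUnion_finset hdisj fun C hC => ?_).symm
        obtain ⟨i, -, rfl⟩ := hsupp C hC
        exact hQ i
    _ ≤ B * ν (⋃ i ∈ S, Q i) := by
        gcongr
        refine Set.iUnion₂_subset fun C hC => ?_
        obtain ⟨i, hi, rfl⟩ := hsupp C hC
        exact Set.subset_biUnion_of_mem (u := Q) hi

section Average

variable {α : Type*} [MeasurableSpace α] {μ : Measure α} {s : Set α}

theorem measureReal_pos_of_setAverage_pos {f : α → ℝ} (h : 0 < ⨍ x in s, f x ∂μ) :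
    0 < μ.real s := by
  rw [setAverage_eq, smul_eq_mul] at h
  refine lt_of_le_of_ne measureReal_nonneg fun h0 => ?_
  simp [← h0] at h

theorem measure_le_of_lt_setAverage {g : α → ℝ} (hg : Measurable g) (hg₀ : 0 ≤ g) {t : ℝ}
    (ht : 0 < t) (hs : t < ⨍ x in s, g x ∂μ) :
    μ s ≤ ENNReal.ofReal (2 / t) *
      μ.withDensity (fun x => ENNReal.ofReal (g x)) (s ∩ {x | t < 2 * g x}) := by
  set U := {x | t < 2 * g x}
  have hm : 0 < μ.real s := measureReal_pos_of_setAverage_pos (ht.trans hs)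
  have hfin : μ s < ∞ := (ENNReal.toReal_pos_iff.1 hm).2
  rw [setAverage_eq, smul_eq_mul, inv_mul_eq_div, lt_div_iff₀ hm] at hs
  have hgs : IntegrableOn g s μ := Integrable.of_integral_ne_zero ((mul_pos ht hm).trans hs).ne'
  have hlow : ∫ x in s \ U, g x ∂μ ≤ t / 2 * μ.real s := by
    have hbound : ∀ x ∈ s \ U, ‖g x‖ ≤ t / 2 := fun x hx => by
      have := hx.2
      simp only [U, Set.mem_ofPred_eq, not_lt] at this
      rw [Real.norm_of_nonneg (hg₀ x)]
      linarith
    have hfin' : μ (s \ U) < ∞ := (measure_mono Set.sdiff_subset).trans_lt hfin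
    calc ∫ x in s \ U, g x ∂μ ≤ t / 2 * μ.real (s \ U) :=
          (Real.le_norm_self _).trans (norm_setIntegral_le_of_norm_le_const hfin' hbound)
      _ ≤ t / 2 * μ.real s := by gcongr; exacts [hfin.ne, Set.sdiff_subset]
  have hsplit :=
    integral_inter_add_sdiff (t := U) (measurableSet_lt measurable_const (hg.const_mul 2)) hgs
  have hhigh : μ.real s ≤ 2 / t * ∫ x in s ∩ U, g x ∂μ := by
    rw [div_mul_eq_mul_div, le_div_iff₀ ht]
    linarith
  calc μ s = ENNReal.ofReal (μ.real s) := (ENNReal.ofReal_toReal hfin.ne).symm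
    _ ≤ ENNReal.ofReal (2 / t) * ENNReal.ofReal (∫ x in s ∩ U, g x ∂μ) := by
      rw [← ENNReal.ofReal_mul (by positivity)]
      exact ENNReal.ofReal_le_ofReal hhigh
    _ ≤ _ := by
      rw [ofReal_integral_eq_lintegral_ofReal (hgs.mono_set Set.inter_subset_left)
        (Filter.Eventually.of_forall hg₀)]
      gcongr
      exact withDensity_apply_le _ _

theorem abs_setAverage_le_setAverage_abs (f : α → ℝ) :
    |⨍ x in s, f x ∂μ| ≤ ⨍ x in s, |f x| ∂μ := by
  simp only [setAverage_eq, smul_eq_mul, abs_mul, abs_inv, abs_of_nonneg measureReal_nonneg]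
  gcongr
  exact abs_integral_le_integral_abs

theorem setAverage_nonneg {f : α → ℝ} (hf : 0 ≤ f) : 0 ≤ ⨍ x in s, f x ∂μ := by
  rw [setAverage_eq]
  exact smul_nonneg (inv_nonneg.2 measureReal_nonneg) (integral_nonneg hf)

end Average

open Set in
theorem tsum_mul_ofReal_sq_eq_lintegral {ι : Type*} [Countable ι] (w : ι → ℝ≥0∞) {v : ι → ℝ}
    (hv : 0 ≤ v) :
    ∑' i, w i * ENNReal.ofReal (v i ^ 2) =
      ∫⁻ t in Ioi 0, (∑' i, {i | t < v i}.indicator w i) * ENNReal.ofReal (2 * t) := by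
  let : MeasurableSpace ι := ⊤
  have hsq (x : ℝ) : ∫ t in 0..x, 2 * t = x ^ 2 := by
    rw [intervalIntegral.integral_const_mul, integral_id]; ring
  have hlayer := lintegral_comp_eq_lintegral_meas_lt_mul (Measure.sum fun i => w i • .dirac i)
    (Filter.Eventually.of_forall hv) (measurable_of_countable v).aemeasurable (g := (2 * ·))
    (fun _ _ => (continuous_const_mul 2).intervalIntegrable _ _)
    ((ae_restrict_mem measurableSet_Ioi).mono fun t (ht : 0 < t) => by positivity)
  simp only [hsq, lintegral_sum_measure, lintegral_smul_measure, lintegral_dirac, smul_eq_mul,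
    Measure.sum_apply _ (MeasurableSpace.measurableSet_top), Measure.smul_apply] at hlayer
  convert hlayer using 4 with t _ i
  simp [Set.indicator_apply]

open Set in
theorem lintegral_withDensity_meas_lt_eq {α : Type*} [MeasurableSpace α] (μ : Measure α)
    {g : α → ℝ} (hg : Measurable g) (hg₀ : 0 ≤ g) {c : ℝ} (hc : 0 ≤ c) :
    ∫⁻ t in Ioi 0, μ.withDensity (fun x => ENNReal.ofReal (g x)) {x | t < c * g x} =
      ENNReal.ofReal c * ∫⁻ x, ENNReal.ofReal (g x ^ 2) ∂μ := by
  rw [← lintegral_eq_lintegral_meas_lt _ (f := fun x => c * g x)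
      (Filter.Eventually.of_forall fun x => mul_nonneg hc (hg₀ x)) (hg.const_mul c).aemeasurable,
    lintegral_withDensity_eq_lintegral_mul _ (by fun_prop) (by fun_prop),
    ← lintegral_const_mul _ (by fun_prop)]
  congr 1 with x
  rw [Pi.mul_apply, ← ENNReal.ofReal_mul (hg₀ x), ← ENNReal.ofReal_mul hc]
  ring_nf

section Dyadic

variable {n : ℕ}

theorem mem_dyadicCube_iff_floor {k : ℤ} {j : Fin n → ℤ} {x : EuclideanSpace ℝ (Fin n)} :
    x ∈ dyadicCube n k j ↔ ∀ i, ⌊(2:ℝ) ^ k * x i⌋ = j i := by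
  have h2 : (0:ℝ) < 2 ^ k := zpow_pos two_pos k
  simp only [dyadicCube, Set.mem_ofPred_eq, Int.floor_eq_iff, zpow_neg, ← div_eq_inv_mul,
    div_le_iff₀' h2, lt_div_iff₀' h2]

theorem floor_two_zpow_mul_eq_floor_div {k k' : ℤ} (hk : k ≤ k') (y : ℝ) :
    ⌊(2:ℝ) ^ k * y⌋ = ⌊(2:ℝ) ^ k' * y⌋ / ((2 ^ (k' - k).toNat : ℕ) : ℤ) := by
  rw [← Int.floor_div_natCast]
  push_cast
  rw [← zpow_natCast, Int.toNat_of_nonneg (sub_nonneg.2 hk), mul_div_right_comm,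
    ← zpow_sub₀ two_ne_zero, sub_sub_cancel]

theorem dyadicCube_subset_or_disjoint_of_le {k k' : ℤ} (hk : k ≤ k') (j j' : Fin n → ℤ) :
    dyadicCube n k' j' ⊆ dyadicCube n k j ∨ Disjoint (dyadicCube n k j) (dyadicCube n k' j') := by
  refine or_iff_not_imp_right.2 fun hint y hy => ?_
  obtain ⟨x, hx, hx'⟩ := Set.not_disjoint_iff.1 hint
  rw [mem_dyadicCube_iff_floor] at hx hx' hy ⊢
  intro i
  rw [floor_two_zpow_mul_eq_floor_div hk, hy, ← hx', ← floor_two_zpow_mul_eq_floor_div hk, hx]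

theorem dyadicCube_subset_or_subset_or_disjoint (k k' : ℤ) (j j' : Fin n → ℤ) :
    dyadicCube n k j ⊆ dyadicCube n k' j' ∨ dyadicCube n k' j' ⊆ dyadicCube n k j ∨
      Disjoint (dyadicCube n k j) (dyadicCube n k' j') := by
  rcases le_total k k' with hk | hk
  · rcases dyadicCube_subset_or_disjoint_of_le hk j j' with h | h
    exacts [Or.inr (Or.inl h), Or.inr (Or.inr h)]
  · rcases dyadicCube_subset_or_disjoint_of_le hk j' j with h | h
    exacts [Or.inl h, Or.inr (Or.inr h.symm)]

theorem measurableSet_dyadicCube (k : ℤ) (j : Fin n → ℤ) : MeasurableSet (dyadicCube n k j) := by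
  simp only [dyadicCube, Set.ofPred_forall]
  refine MeasurableSet.iInter fun i => ?_
  have hi : Measurable fun x : EuclideanSpace ℝ (Fin n) => x i := by fun_prop
  exact (measurableSet_le measurable_const hi).inter (measurableSet_lt hi measurable_const)

end Dyadic

theorem avg_eq_setAverage {n : ℕ} (μ : Measure (EuclideanSpace ℝ (Fin n)))
    (s : Set (EuclideanSpace ℝ (Fin n))) (f : EuclideanSpace ℝ (Fin n) → ℝ) :
    avg n μ s f = ⨍ x in s, f x ∂μ := by
  rw [avg, setAverage_eq, smul_eq_mul, measureReal_def]
  split_ifs with h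
  · simp [h]
  · rw [inv_mul_eq_div]

theorem avg_sq_le_setAverage_abs_sq {n : ℕ} {μ : Measure (EuclideanSpace ℝ (Fin n))}
    {f f₀ : EuclideanSpace ℝ (Fin n) → ℝ} (hff₀ : f =ᵐ[μ] f₀) (s : Set (EuclideanSpace ℝ (Fin n))) :
    avg n μ s f ^ 2 ≤ (⨍ x in s, |f₀ x| ∂μ) ^ 2 := by
  rw [avg_eq_setAverage, average_congr (ae_restrict_of_ae hff₀), ← sq_abs]
  gcongr
  exact abs_setAverage_le_setAverage_abs f₀

def carlesonConstant (n : ℕ) (μ : Measure (EuclideanSpace ℝ (Fin n)))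
    (a : ℤ → (Fin n → ℤ) → ℝ≥0) : ℝ≥0∞ :=
  ⨆ (k : ℤ) (j : Fin n → ℤ), (μ (dyadicCube n k j))⁻¹ *
    ∑' (k' : ℤ) (j' : Fin n → ℤ),
      if dyadicCube n k' j' ⊆ dyadicCube n k j then (a k' j' : ℝ≥0∞) else 0

section Carleson

variable {n : ℕ} (μ : Measure (EuclideanSpace ℝ (Fin n))) (a : ℤ → (Fin n → ℤ) → ℝ≥0)

theorem tsum_subcube_le_carlesonConstant_mul {k : ℤ} {j : Fin n → ℤ}
    (h₀ : μ (dyadicCube n k j) ≠ 0) (hfin : μ (dyadicCube n k j) ≠ ∞) :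
    ∑' P : ℤ × (Fin n → ℤ),
        (if dyadicCube n P.1 P.2 ⊆ dyadicCube n k j then (a P.1 P.2 : ℝ≥0∞) else 0) ≤
      carlesonConstant n μ a * μ (dyadicCube n k j) := by
  rw [ENNReal.tsum_prod', mul_comm, ← ENNReal.inv_mul_le_iff h₀ hfin]
  exact le_iSup₂ (f := fun k j => (μ (dyadicCube n k j))⁻¹ * ∑' (k' : ℤ) (j' : Fin n → ℤ),
    if dyadicCube n k' j' ⊆ dyadicCube n k j then (a k' j' : ℝ≥0∞) else 0) k j

theorem tsum_indicator_lt_setAverage_le {g : EuclideanSpace ℝ (Fin n) → ℝ} (hg : Measurable g)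
    (hg₀ : 0 ≤ g) {t : ℝ} (ht : 0 < t) :
    ∑' P : ℤ × (Fin n → ℤ), {P | t < ⨍ x in dyadicCube n P.1 P.2, g x ∂μ}.indicator
        (fun P => (a P.1 P.2 : ℝ≥0∞)) P ≤
      carlesonConstant n μ a * ENNReal.ofReal (2 / t) *
        μ.withDensity (fun x => ENNReal.ofReal (g x)) {x | t < 2 * g x} := by
  set ρ := μ.withDensity (fun x => ENNReal.ofReal (g x))
  set U := {x | t < 2 * g x}
  have hpack : ∀ Q ∈ {P : ℤ × (Fin n → ℤ) | t < ⨍ x in dyadicCube n P.1 P.2, g x ∂μ},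
      ∑' P : ℤ × (Fin n → ℤ),
        (if dyadicCube n P.1 P.2 ⊆ dyadicCube n Q.1 Q.2 then (a P.1 P.2 : ℝ≥0∞) else 0) ≤
      carlesonConstant n μ a * ENNReal.ofReal (2 / t) * ρ.restrict U (dyadicCube n Q.1 Q.2) := by
    intro Q hQ
    obtain ⟨h₀, hfin⟩ :=
      ENNReal.toReal_ne_zero.1 (measureReal_pos_of_setAverage_pos (ht.trans hQ)).ne'
    rw [Measure.restrict_apply (measurableSet_dyadicCube Q.1 Q.2), mul_assoc]
    exact (tsum_subcube_le_carlesonConstant_mul μ a h₀ hfin).trans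
      (mul_le_mul_right (measure_le_of_lt_setAverage hg hg₀ ht hQ) _)
  refine (tsum_indicator_le_of_packing _ (fun P => measurableSet_dyadicCube P.1 P.2)
    (fun P P' => dyadicCube_subset_or_subset_or_disjoint P.1 P'.1 P.2 P'.2) _ _ _ hpack).trans ?_
  exact mul_le_mul_right ((measure_mono (Set.subset_univ _)).trans_eq (ρ.restrict_apply_univ U)) _

theorem tsum_mul_sq_setAverage_le {g : EuclideanSpace ℝ (Fin n) → ℝ} (hg : Measurable g)
    (hg₀ : 0 ≤ g) :
    ∑' P : ℤ × (Fin n → ℤ),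
        (a P.1 P.2 : ℝ≥0∞) * ENNReal.ofReal ((⨍ x in dyadicCube n P.1 P.2, g x ∂μ) ^ 2) ≤
      8 * carlesonConstant n μ a * ∫⁻ x, ENNReal.ofReal (g x ^ 2) ∂μ := by
  set K := carlesonConstant n μ a
  set ρ := μ.withDensity (fun x => ENNReal.ofReal (g x))
  have hρ : Measurable fun t : ℝ => ρ {x | t < 2 * g x} :=
    Antitone.measurable fun t t' htt' => measure_mono fun x hx => htt'.trans_lt hx
  calc _ = ∫⁻ t in Set.Ioi 0, (∑' P : ℤ × (Fin n → ℤ),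
          {P | t < ⨍ x in dyadicCube n P.1 P.2, g x ∂μ}.indicator (fun P => (a P.1 P.2 : ℝ≥0∞)) P) *
          ENNReal.ofReal (2 * t) :=
        tsum_mul_ofReal_sq_eq_lintegral _ fun P => setAverage_nonneg hg₀
    _ ≤ ∫⁻ t in Set.Ioi 0, K * 4 * ρ {x | t < 2 * g x} := by
        refine setLIntegral_mono' measurableSet_Ioi fun t (ht : 0 < t) => ?_
        calc _ ≤ K * ENNReal.ofReal (2 / t) * ρ {x | t < 2 * g x} * ENNReal.ofReal (2 * t) := by
              gcongr
              exact tsum_indicator_lt_setAverage_le μ a hg hg₀ ht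
          _ = K * 4 * ρ {x | t < 2 * g x} := by
              rw [mul_right_comm, mul_assoc K, ← ENNReal.ofReal_mul (by positivity),
                show 2 / t * (2 * t) = 4 by field_simp; norm_num, ENNReal.ofReal_ofNat]
    _ = 8 * K * ∫⁻ x, ENNReal.ofReal (g x ^ 2) ∂μ := by
        rw [lintegral_const_mul _ hρ, lintegral_withDensity_meas_lt_eq μ hg hg₀ zero_le_two,
          ENNReal.ofReal_ofNat]
        ring

end Carleson

/-- **Carleson Embedding Theorem.** For non-negative coefficients `(a_I)` over
the dyadic grid, `Σ_I a_I |⟨f⟩_I|² ≲ sup_I (μ(I)⁻¹ Σ_{J ⊆ I} a_J) ‖f‖²_{L²(μ)}`,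
with an absolute constant. -/
theorem carleson_embedding :
    ∃ C : ℝ≥0∞, 0 < C ∧ C ≠ ∞ ∧
      ∀ (n : ℕ) (μ : Measure (EuclideanSpace ℝ (Fin n)))
        (a : ℤ → (Fin n → ℤ) → ℝ≥0) (f : EuclideanSpace ℝ (Fin n) → ℝ),
        MemLp f 2 μ →
        ∑' (k : ℤ) (j : Fin n → ℤ),
            (a k j : ℝ≥0∞) * ENNReal.ofReal ((avg n μ (dyadicCube n k j) f) ^ 2) ≤
          C *
            (⨆ (k : ℤ) (j : Fin n → ℤ),
              (μ (dyadicCube n k j))⁻¹ *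
                ∑' (k' : ℤ) (j' : Fin n → ℤ),
                  if dyadicCube n k' j' ⊆ dyadicCube n k j then (a k' j' : ℝ≥0∞) else 0) *
            ∫⁻ x, ENNReal.ofReal ((f x) ^ 2) ∂μ := by
  refine ⟨8, by norm_num, by norm_num, fun n μ a f hf => ?_⟩
  obtain ⟨f₀, hf₀, hff₀⟩ : ∃ f₀, Measurable f₀ ∧ f =ᵐ[μ] f₀ :=
    ⟨_, hf.1.aemeasurable.measurable_mk, hf.1.aemeasurable.ae_eq_mk⟩
  calc _ = ∑' P : ℤ × (Fin n → ℤ),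
        (a P.1 P.2 : ℝ≥0∞) * ENNReal.ofReal (avg n μ (dyadicCube n P.1 P.2) f ^ 2) :=
        ENNReal.tsum_prod.symm
    _ ≤ ∑' P : ℤ × (Fin n → ℤ), (a P.1 P.2 : ℝ≥0∞) *
          ENNReal.ofReal ((⨍ x in dyadicCube n P.1 P.2, |f₀ x| ∂μ) ^ 2) :=
        ENNReal.tsum_le_tsum fun P => by
          gcongr _ * ENNReal.ofReal ?_
          exact avg_sq_le_setAverage_abs_sq hff₀ _
    _ ≤ 8 * carlesonConstant n μ a * ∫⁻ x, ENNReal.ofReal (|f₀ x| ^ 2) ∂μ :=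
        tsum_mul_sq_setAverage_le μ a hf₀.abs fun x => abs_nonneg _
    _ = _ := by
        rw [lintegral_congr_ae (g := fun x => ENNReal.ofReal (f x ^ 2))
          (hff₀.mono fun x hx => by simp only [hx, sq_abs])]
        rfl
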